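/- For every $\varepsilon>0$ there exists $C=C(\varepsilon)<\infty$ such that for all $\lambda\in S_{\pi-\varepsilon}$ with $|\lambda|=1$, all $\xi\in\mathbb{R}^2$ with $|\xi|>1$, all $y_3$ with $0<y_3\le1$, and all $i,j\in\{1,2\}$, one has $\Big|\big(e^{-|\xi|y_3}-e^{-\omega_\lambda(\xi)y_3}\big)\dfrac{\xi_i\xi_j}{|\xi|}\Big|\le C\,y_3\,e^{-|\xi|y_3}$, where $\omega_\lambda(\xi):=\sqrt{\lambda+|\xi|^2}$ is the principal square root. -/

import Mathlib

open MeasureTheory Set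
open scoped ENNReal NNReal
noncomputable section

/-- The sector `S_{π-ε}` : complex numbers `ρ e^{iθ}` with `ρ > 0`, `|θ| ≤ π - ε`. -/
def Sector (ε : ℝ) : Set ℂ := {z : ℂ | z ≠ 0 ∧ |z.arg| ≤ Real.pi - ε}

/-- `ω_λ(ξ) = √(λ + |ξ|²)`, principal branch of the square root. -/
def omeg (lam : ℂ) (r : ℝ) : ℂ := (lam + (r : ℂ) ^ 2) ^ ((1 : ℂ) / 2)

/-!
Write `r = |ξ|` and `ω = ω_λ(ξ)`. Since `ω² - r² = λ` and the principal square root has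
nonnegative real part, `|ω - r| = |λ| / |ω + r| ≤ 1 / r`. Hence
`|e^{-r y} - e^{-ω y}| = e^{-r y} |1 - e^{(r - ω) y}| ≤ 2 e^{-r y} y / r` as long as `y / r ≤ 1`,
and the factor `1 / r` absorbs `|ξᵢ ξⱼ| / r ≤ r`; so `C = 2` works for every `ε`.
-/

lemma omeg_eq_cpow_inv_two (lam : ℂ) (r : ℝ) : omeg lam r = (lam + (r : ℂ) ^ 2) ^ (2⁻¹ : ℂ) := by
  rw [omeg, one_div]

lemma omeg_sq (lam : ℂ) (r : ℝ) : omeg lam r ^ 2 = lam + (r : ℂ) ^ 2 := by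
  rw [omeg_eq_cpow_inv_two, Complex.cpow_ofNat_inv_pow]

lemma re_omeg_nonneg (lam : ℂ) (r : ℝ) : 0 ≤ (omeg lam r).re := by
  rw [omeg_eq_cpow_inv_two, Complex.cpow_inv_two_re]
  exact Real.sqrt_nonneg _

lemma norm_omeg_sub_le (lam : ℂ) {r : ℝ} (hr : 0 < r) : ‖omeg lam r - r‖ ≤ ‖lam‖ / r := by
  set ω := omeg lam r
  have hre : r ≤ ‖ω + r‖ := by
    have : r ≤ (ω + r).re := by simpa using re_omeg_nonneg lam r
    exact this.trans (Complex.re_le_norm _)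
  have hprod : (ω - r) * (ω + r) = lam := by linear_combination omeg_sq lam r
  rw [le_div_iff₀ hr]
  calc ‖ω - r‖ * r ≤ ‖ω - r‖ * ‖ω + r‖ := by gcongr
    _ = ‖lam‖ := by rw [← norm_mul, hprod]

lemma norm_cexp_sub_cexp_le {u v : ℂ} (h : ‖v - u‖ ≤ 1) :
    ‖Complex.exp u - Complex.exp v‖ ≤ 2 * ‖v - u‖ * Real.exp u.re := by
  have hfactor : Complex.exp u - Complex.exp v = -(Complex.exp u * (Complex.exp (v - u) - 1)) := by
    rw [mul_sub, ← Complex.exp_add]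
    ring_nf
  rw [hfactor, norm_neg, norm_mul, Complex.norm_exp, mul_comm]
  gcongr
  exact Complex.norm_exp_sub_one_le h

lemma abs_mul_div_norm_le {ι : Type*} [Fintype ι] (ξ : EuclideanSpace ℝ ι) (i j : ι) :
    |ξ i * ξ j / ‖ξ‖| ≤ ‖ξ‖ := by
  have hi := PiLp.norm_apply_le ξ i
  have hj := PiLp.norm_apply_le ξ j
  rw [Real.norm_eq_abs] at hi hj
  rw [abs_div, abs_norm, abs_mul]
  exact div_le_of_le_mul₀ (norm_nonneg _) (norm_nonneg _)
    (mul_le_mul hi hj (abs_nonneg _) (norm_nonneg _))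

theorem high_frequency_difference_bound_general (ε : ℝ) :
    ∃ C : ℝ, 0 < C ∧
      ∀ lam ∈ Sector ε, ‖lam‖ = 1 →
        ∀ ξ : EuclideanSpace ℝ (Fin 2), 1 < ‖ξ‖ →
          ∀ y3 : ℝ, 0 < y3 → y3 ≤ 1 →
            ∀ i j : Fin 2,
              ‖(Complex.exp (-(‖ξ‖ : ℂ) * (y3 : ℂ))
                  - Complex.exp (-(omeg lam ‖ξ‖) * (y3 : ℂ)))
                  * ((ξ i * ξ j / ‖ξ‖ : ℝ) : ℂ)‖
                ≤ C * y3 * Real.exp (-(‖ξ‖ * y3)) := by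
  refine ⟨2, two_pos, fun lam _ hlam ξ hξ y3 hy0 hy1 i j => ?_⟩
  set r := ‖ξ‖
  have hr : 0 < r := one_pos.trans hξ
  have hexponent : ‖-omeg lam r * y3 - -r * y3‖ ≤ y3 / r := by
    have hω : ‖omeg lam r - r‖ ≤ 1 / r := hlam ▸ norm_omeg_sub_le lam hr
    rw [← sub_mul, neg_sub_neg, norm_mul, norm_sub_rev, Complex.norm_real,
      Real.norm_of_nonneg hy0.le, div_eq_mul_one_div y3, mul_comm y3]
    gcongr
  have hsmall : y3 / r ≤ 1 := (div_le_one hr).2 (hy1.trans hξ.le)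
  calc _ = ‖Complex.exp (-r * y3) - Complex.exp (-omeg lam r * y3)‖ * |ξ i * ξ j / r| := by
        rw [norm_mul, Complex.norm_real, Real.norm_eq_abs]
    _ ≤ 2 * (y3 / r) * Real.exp (-(r * y3)) * r := by
        gcongr
        · refine (norm_cexp_sub_cexp_le (hexponent.trans hsmall)).trans ?_
          gcongr
          simp
        · exact abs_mul_div_norm_le ξ i j
    _ = 2 * y3 * Real.exp (-(r * y3)) := by field_simp

/-- for every `ε > 0` there is `C = C(ε) < ∞` such that for all `λ ∈ S_{π-ε}`
with `|λ| = 1`, all `ξ ∈ ℝ²` with `|ξ| > 1`, all `0 < y₃ ≤ 1` and all `i, j ∈ {1,2}`,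
`|(e^{-|ξ| y₃} - e^{-ω_λ(ξ) y₃}) ξᵢξⱼ/|ξ|| ≤ C y₃ e^{-|ξ| y₃}`. -/
theorem high_frequency_difference_bound (ε : ℝ) (hε : 0 < ε) :
    ∃ C : ℝ, 0 < C ∧
      ∀ lam ∈ Sector ε, ‖lam‖ = 1 →
        ∀ ξ : EuclideanSpace ℝ (Fin 2), 1 < ‖ξ‖ →
          ∀ y3 : ℝ, 0 < y3 → y3 ≤ 1 →
            ∀ i j : Fin 2,
              ‖(Complex.exp (-(‖ξ‖ : ℂ) * (y3 : ℂ))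
                  - Complex.exp (-(omeg lam ‖ξ‖) * (y3 : ℂ)))
                  * ((ξ i * ξ j / ‖ξ‖ : ℝ) : ℂ)‖
                ≤ C * y3 * Real.exp (-(‖ξ‖ * y3)) :=
  high_frequency_difference_bound_general ε
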